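/- Fix a prime power q = p^n with p prime, and fix a positive integer m. Define r'_q on prime powers by r'_q(ℓ^e) = 1/(ℓ^e − ℓ^{e−2}) if v_ℓ(q−1) ≥ e, and r'_q(ℓ^e) = (ℓ^{2v+1}+1)/(ℓ^{e+2v−1}(ℓ^2−1)) if v = v_ℓ(q−1) < e (for ℓ ≠ p), and r'_q(p^e) = 1/(p^e − p^{e−1}). For a prime ℓ ≠ p, e ≥ 1, v = v_ℓ(q−1) and 0 ≤ k ≤ t = min(e, v), define w̃(ℓ^k, ℓ^e) as follows: w̃(ℓ^k, ℓ^e) = ψ(ℓ^{e−k})·(ℓ−1)/(ℓ^{k+1}·φ(ℓ^e)·ψ(ℓ^e)) when k < min(e, v); w̃(ℓ^t, ℓ^e) = ψ(ℓ^{e−t})/(ℓ^t·φ(ℓ^e)·ψ(ℓ^e)) for the top term when t = v < e; and w̃(ℓ^e, ℓ^e) = 1/(ℓ^e·φ(ℓ^e)·ψ(ℓ^e)) when v ≥ e. Then for every prime ℓ ≠ p and e ≥ 1 one has r'_q(ℓ^e) = ∑_{k=0}^{t} w̃(ℓ^k, ℓ^e). -/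

import Mathlib

def dedekindPsi (n : ℕ) : ℚ :=
  n * ∏ p ∈ n.primeFactors, (1 + 1 / (p : ℚ))

lemma dedekindPsi_prime_pow {ℓ j : ℕ} (hℓ : ℓ.Prime) (hj : j ≠ 0) :
    dedekindPsi (ℓ ^ j) = (ℓ : ℚ) ^ j * (1 + 1 / (ℓ : ℚ)) := by
  unfold dedekindPsi
  rw [Nat.primeFactors_prime_pow hj hℓ, Finset.prod_singleton]
  push_cast
  ring

set_option maxHeartbeats 1000000 in
/-- Lemma 2.1 (basecase): for q = p^n a prime power, ℓ ≠ p a prime, e ≥ 1,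
v = v_ℓ(q−1) and t = min(e, v), the sum of the Howe densities w̃(ℓ^k, ℓ^e) over
0 ≤ k ≤ t equals the Castryck–Hubrechts density r'_q(ℓ^e). Here, for k < t,
w̃(ℓ^k, ℓ^e) = ψ(ℓ^{e−k})(ℓ−1)/(ℓ^{k+1}·φ(ℓ^e)·ψ(ℓ^e)); the top term is
w̃(ℓ^t, ℓ^e) = ψ(ℓ^{e−v})/(ℓ^v·φ(ℓ^e)·ψ(ℓ^e)) when t = v < e, and
w̃(ℓ^e, ℓ^e) = 1/(ℓ^e·φ(ℓ^e)·ψ(ℓ^e)) when v ≥ e; and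
r'_q(ℓ^e) = 1/(ℓ^e − ℓ^{e−2}) if v ≥ e, and (ℓ^{2v+1}+1)/(ℓ^{e+2v−1}(ℓ²−1)) if v < e. -/
theorem basecase (p n q ℓ e v t : ℕ) (hp : p.Prime) (hn : 1 ≤ n) (hq : q = p ^ n)
    (hℓ : ℓ.Prime) (hℓp : ℓ ≠ p) (he : 1 ≤ e)
    (hv : v = padicValNat ℓ (q - 1)) (ht : t = min e v) :
    (if v ≥ e then 1 / ((ℓ : ℚ) ^ (e : ℤ) - (ℓ : ℚ) ^ ((e : ℤ) - 2))
      else ((ℓ : ℚ) ^ (2 * v + 1) + 1) / ((ℓ : ℚ) ^ (e + 2 * v - 1) * ((ℓ : ℚ) ^ 2 - 1)))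
    = ∑ k ∈ Finset.range (t + 1),
        (if k < t then
          dedekindPsi (ℓ ^ (e - k)) * ((ℓ : ℚ) - 1)
            / ((ℓ : ℚ) ^ (k + 1) * (ℓ ^ e).totient * dedekindPsi (ℓ ^ e))
        else if v < e then
          dedekindPsi (ℓ ^ (e - v)) / ((ℓ : ℚ) ^ v * (ℓ ^ e).totient * dedekindPsi (ℓ ^ e))
        else
          1 / ((ℓ : ℚ) ^ e * (ℓ ^ e).totient * dedekindPsi (ℓ ^ e))) := by
  have hℓ2 : (2 : ℚ) ≤ (ℓ : ℚ) := by exact_mod_cast hℓ.two_le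
  have hL0 : (ℓ : ℚ) ≠ 0 := by positivity
  have hL1 : (ℓ : ℚ) - 1 ≠ 0 := by intro h; nlinarith [sub_eq_zero.mp h]
  have hL1' : (1 : ℚ) + 1 / (ℓ : ℚ) ≠ 0 := by positivity
  have hX0 : (ℓ : ℚ) ^ e ≠ 0 := pow_ne_zero _ hL0
  have hΦ : ((ℓ ^ e).totient : ℚ) = (ℓ : ℚ) ^ e / (ℓ : ℚ) * ((ℓ : ℚ) - 1) := by
    rw [Nat.totient_prime_pow hℓ he]
    push_cast [Nat.cast_sub hℓ.one_lt.le, pow_sub₀ _ hL0 he]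
    ring
  have hΨ : dedekindPsi (ℓ ^ e) = (ℓ : ℚ) ^ e * (1 + 1 / (ℓ : ℚ)) :=
    dedekindPsi_prime_pow hℓ (by omega)
  have hte : t ≤ e := by omega
  have key : ∀ k ∈ Finset.range t,
      (if k < t then
          dedekindPsi (ℓ ^ (e - k)) * ((ℓ : ℚ) - 1)
            / ((ℓ : ℚ) ^ (k + 1) * (ℓ ^ e).totient * dedekindPsi (ℓ ^ e))
        else if v < e then
          dedekindPsi (ℓ ^ (e - v)) / ((ℓ : ℚ) ^ v * (ℓ ^ e).totient * dedekindPsi (ℓ ^ e))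
        else
          1 / ((ℓ : ℚ) ^ e * (ℓ ^ e).totient * dedekindPsi (ℓ ^ e)))
        = (1 / (ℓ : ℚ) ^ e) * (1 / (ℓ : ℚ) ^ 2) ^ k := by
    intro k hk
    have hkt : k < t := Finset.mem_range.mp hk
    rw [if_pos hkt, dedekindPsi_prime_pow hℓ (by omega), hΦ, hΨ,
      pow_sub₀ _ hL0 (by omega : k ≤ e)]
    rw [div_pow, one_pow, ← pow_mul]
    field_simp
    ring
  rw [Finset.sum_range_succ, Finset.sum_congr rfl key, ← Finset.mul_sum,
    geom_sum_eq (show (1 : ℚ) / (ℓ : ℚ) ^ 2 ≠ 1 from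
      ne_of_lt ((div_lt_one (by positivity)).mpr (by nlinarith))), if_neg (lt_irrefl t)]
  by_cases hve : e ≤ v
  · rw [show t = e from by omega]
    rw [if_pos hve, if_neg (by omega : ¬ v < e), hΦ, hΨ,
      (show ((1 : ℚ) / (ℓ : ℚ) ^ 2) ^ e = 1 / ((ℓ : ℚ) ^ e) ^ 2 by
        rw [div_pow, one_pow, ← pow_mul, ← pow_mul, Nat.mul_comm]),
      zpow_sub₀ hL0, zpow_natCast]
    rw [show (ℓ : ℚ) ^ (2 : ℤ) = (ℓ : ℚ) ^ 2 by rw [zpow_two, pow_two]]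
    have h21 : (ℓ : ℚ) ^ 2 - 1 ≠ 0 := by nlinarith
    have hinv : 1 / (ℓ : ℚ) ^ 2 - 1 ≠ 0 :=
      sub_ne_zero.mpr (ne_of_lt ((div_lt_one (by positivity)).mpr (by nlinarith)))
    have h12 : (1 : ℚ) - (ℓ : ℚ) ^ 2 ≠ 0 := by nlinarith
    have hX0' := hX0
    generalize hXdef : (ℓ : ℚ) ^ e = X at hX0' ⊢
    rw [show X - X / (ℓ : ℚ) ^ 2 = X * ((ℓ : ℚ) ^ 2 - 1) / (ℓ : ℚ) ^ 2 by
      field_simp,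
      show (1 : ℚ) / (ℓ : ℚ) ^ 2 - 1 = (1 - (ℓ : ℚ) ^ 2) / (ℓ : ℚ) ^ 2 by
        field_simp,
      show (1 : ℚ) / X ^ 2 - 1 = (1 - X ^ 2) / X ^ 2 by field_simp]
    rw [div_div_div_eq]
    field_simp
    ring
  · have hpow1 : (ℓ : ℚ) ^ (e + 2 * v - 1) = (ℓ : ℚ) ^ e / (ℓ : ℚ) * ((ℓ : ℚ) ^ v) ^ 2 := by
      rw [show e + 2 * v - 1 = (e - 1) + v * 2 from by omega, pow_add,
        pow_sub₀ _ hL0 he, pow_mul]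
      ring
    have hpow2 : (ℓ : ℚ) ^ (2 * v + 1) = ((ℓ : ℚ) ^ v) ^ 2 * (ℓ : ℚ) := by
      rw [show 2 * v + 1 = v * 2 + 1 from by omega, pow_add, pow_mul, pow_one]
    rw [show t = v from by omega]
    rw [if_neg hve, if_pos (by omega : v < e),
      (show ((1 : ℚ) / (ℓ : ℚ) ^ 2) ^ v = 1 / ((ℓ : ℚ) ^ v) ^ 2 by
        rw [div_pow, one_pow, ← pow_mul, ← pow_mul, Nat.mul_comm]), hΦ, hΨ,
      dedekindPsi_prime_pow hℓ (by omega),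
      pow_sub₀ _ hL0 (by omega : v ≤ e), hpow1, hpow2]
    have h21 : (ℓ : ℚ) ^ 2 - 1 ≠ 0 := by nlinarith
    have hinv : 1 / (ℓ : ℚ) ^ 2 - 1 ≠ 0 :=
      sub_ne_zero.mpr (ne_of_lt ((div_lt_one (by positivity)).mpr (by nlinarith)))
    have hX0' := hX0
    have hY0 : (ℓ : ℚ) ^ v ≠ 0 := pow_ne_zero _ hL0
    have h12 : (1 : ℚ) - (ℓ : ℚ) ^ 2 ≠ 0 := by nlinarith
    generalize hXdef : (ℓ : ℚ) ^ e = X at hX0' ⊢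
    generalize hYdef : (ℓ : ℚ) ^ v = Y at hY0 ⊢
    rw [show (1 : ℚ) / (ℓ : ℚ) ^ 2 - 1 = (1 - (ℓ : ℚ) ^ 2) / (ℓ : ℚ) ^ 2 by
        field_simp,
      show (1 : ℚ) / Y ^ 2 - 1 = (1 - Y ^ 2) / Y ^ 2 by field_simp]
    rw [div_div_div_eq]
    field_simp
    ring
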